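/- For every finite simple graph G = (V,E) with n vertices and every vertex x, the expectation of the index i_f(x) over all n! bijections f : V → {1,…,n}, each taken with equal probability 1/n!, equals the curvature: (1/n!) Σ_{f bijection} i_f(x) = K(x). -/

import Mathlib

/-!
Index expectation: averaging the Poincaré–Hopf index `i_f(x)` over all `n!` bijections
`f : V → {1,…,n}` (uniformly) gives the curvature `K(x)`.
-/

noncomputable section

variable {V : Type} [Fintype V] [DecidableEq V]

/-- `numCliques G k` is the number of `k`-element cliques of `G`. -/
noncomputable def numCliques (G : SimpleGraph V) (k : ℕ) : ℕ :=
  letI : DecidableRel G.Adj := Classical.decRel _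
  (G.cliqueFinset k).card

/-- Euler characteristic `χ(G) = Σ_{k ≥ 0} (-1)^k v_k`, where `v_k` is the number of
`(k+1)`-element cliques of `G`. -/
noncomputable def eulerChar (G : SimpleGraph V) : ℤ :=
  ∑ k ∈ Finset.range (Fintype.card V), (-1 : ℤ) ^ k * numCliques G (k + 1)

/-- The curvature `K(x) = Σ_{k ≥ 0} (-1)^k V_{k-1}(x)/(k+1)`, where `V_{k-1}(x)` is the number of
`k`-element cliques of the unit sphere `S(x)`, with `V_{-1}(x) = 1`. -/
noncomputable def curvature (G : SimpleGraph V) (x : V) : ℚ :=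
  letI : Fintype ↥(G.neighborSet x) := (Set.toFinite _).fintype
  ∑ k ∈ Finset.range (Fintype.card V + 1),
    (-1 : ℚ) ^ k * (numCliques (G.induce (G.neighborSet x)) k : ℚ) / (k + 1)

/-- The index `i_f(x) = 1 - χ(S_f^-(x))`, where `S_f^-(x)` is the subgraph of `G` induced
on `{y : y adjacent to x and f(y) < f(x)}`; here `f : V → {1,…,n}`. -/
noncomputable def fIndex (G : SimpleGraph V) (f : V → Fin (Fintype.card V)) (x : V) : ℤ :=
  letI : Fintype ↥{y | G.Adj x y ∧ f y < f x} := (Set.toFinite _).fintype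
  1 - eulerChar (G.induce {y | G.Adj x y ∧ f y < f x})

/-!
The `(k+1)`-cliques of `S_f^-(x)` are exactly the `(k+1)`-cliques `T` of `S(x)` on which
`f < f x`, so by linearity the average of `i_f(x)` is `1 - Σ_k (-1)^k Σ_T P(f < f x on T)`.
Transpositions act transitively on the possible positions of the maximum of `f` on `T ∪ {x}`,
so `P(f < f x on T) = 1/(k+2)`, and the average is `1 - Σ_k (-1)^k V_k(x)/(k+2) = K(x)`.
-/

open Finset

lemma Finset.swap_apply_mem {α : Type*} [DecidableEq α] {S : Finset α} {x z y : α} (hx : x ∈ S)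
    (hz : z ∈ S) (hy : y ∈ S) : Equiv.swap x z y ∈ S := by
  rw [Equiv.swap_apply_def]
  split_ifs <;> assumption

lemma Finset.card_filter_forall_le_eq_one {α β : Type*} [LinearOrder β] {f : α → β}
    (hf : Function.Injective f) {S : Finset α} (hS : S.Nonempty) :
    #{z ∈ S | ∀ y ∈ S, f y ≤ f z} = 1 := by
  obtain ⟨z, hz, hmax⟩ := S.exists_max_image f hS
  refine card_eq_one.2 ⟨z, eq_singleton_iff_unique_mem.2 ⟨mem_filter.2 ⟨hz, hmax⟩, ?_⟩⟩
  intro w hw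
  exact hf (le_antisymm (hmax w (mem_filter.1 hw).1) ((mem_filter.1 hw).2 z hz))

section Bijections

variable {α β : Type*} [Fintype α] [DecidableEq α] [Fintype β] [LinearOrder β]

lemma card_equiv_forall_le_eq {S : Finset α} {x z : α} (hx : x ∈ S) (hz : z ∈ S) :
    #{f : α ≃ β | ∀ y ∈ S, f y ≤ f z} = #{f : α ≃ β | ∀ y ∈ S, f y ≤ f x} := by
  refine card_equiv ((Equiv.swap x z).equivCongr (Equiv.refl β)) fun f => ?_
  simp only [mem_filter, mem_univ, true_and, Equiv.equivCongr_apply_apply, Equiv.symm_swap,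
    Equiv.coe_refl, id_eq, Equiv.swap_apply_left]
  exact ⟨fun h y hy => h _ (swap_apply_mem hx hz hy),
    fun h y hy => by simpa using h _ (swap_apply_mem hx hz hy)⟩

lemma card_equiv_forall_le_mul_card {S : Finset α} {x : α} (hx : x ∈ S) :
    #{f : α ≃ β | ∀ y ∈ S, f y ≤ f x} * #S = Fintype.card (α ≃ β) := by
  calc #{f : α ≃ β | ∀ y ∈ S, f y ≤ f x} * #S
      = ∑ z ∈ S, #{f : α ≃ β | ∀ y ∈ S, f y ≤ f z} := by
        rw [sum_congr rfl fun z hz => card_equiv_forall_le_eq hx hz, sum_const, smul_eq_mul,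
          mul_comm]
    _ = ∑ f : α ≃ β, #{z ∈ S | ∀ y ∈ S, f y ≤ f z} :=
        sum_card_bipartiteAbove_eq_sum_card_bipartiteBelow _
    _ = ∑ _f : α ≃ β, 1 := sum_congr rfl fun f _ => by
        -- the filter here is decided through `Fintype α`, in the lemma through `S`
        convert card_filter_forall_le_eq_one f.injective ⟨x, hx⟩
    _ = Fintype.card (α ≃ β) := by simp

lemma card_equiv_forall_lt_mul_card_add_one {T : Finset α} {x : α} (hx : x ∉ T) :
    #{f : α ≃ β | ∀ y ∈ T, f y < f x} * (#T + 1) = Fintype.card (α ≃ β) := by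
  have hlt : ∀ f : α ≃ β, (∀ y ∈ insert x T, f y ≤ f x) ↔ ∀ y ∈ T, f y < f x := by
    intro f
    simp only [forall_mem_insert, le_refl, true_and]
    exact forall₂_congr fun y hy =>
      (f.injective.ne (ne_of_mem_of_not_mem hy hx)).le_iff_lt
  rw [← card_insert_of_notMem hx, ← card_equiv_forall_le_mul_card (mem_insert_self x T)]
  simp only [hlt]

lemma sum_card_filter_forall_lt_mul {𝒞 : Finset (Finset α)} {x : α} {k : ℕ}
    (h𝒞 : ∀ T ∈ 𝒞, x ∉ T ∧ #T = k) :
    (∑ f : α ≃ β, #{T ∈ 𝒞 | ∀ y ∈ T, f y < f x}) * (k + 1) = #𝒞 * Fintype.card (α ≃ β) := by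
  calc (∑ f : α ≃ β, #{T ∈ 𝒞 | ∀ y ∈ T, f y < f x}) * (k + 1)
      = ∑ T ∈ 𝒞, #{f : α ≃ β | ∀ y ∈ T, f y < f x} * (k + 1) := by
        rw [← sum_mul]
        exact congrArg (· * (k + 1)) (sum_card_bipartiteAbove_eq_sum_card_bipartiteBelow _)
    _ = ∑ _T ∈ 𝒞, Fintype.card (α ≃ β) := sum_congr rfl fun T hT => by
        obtain ⟨hxT, rfl⟩ := h𝒞 T hT
        exact card_equiv_forall_lt_mul_card_add_one hxT
    _ = #𝒞 * Fintype.card (α ≃ β) := by rw [sum_const, smul_eq_mul]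

end Bijections

open Classical in
def cliquesIn (G : SimpleGraph V) (s : Set V) (k : ℕ) : Finset (Finset V) :=
  {T ∈ G.cliqueFinset k | ↑T ⊆ s}

section Cliques

variable {G : SimpleGraph V} {s : Set V} {k : ℕ} {T : Finset V}

lemma mem_cliquesIn : T ∈ cliquesIn G s k ↔ G.IsNClique k T ∧ ↑T ⊆ s := by
  simp [cliquesIn]

lemma cliquesIn_setOf_and (p : V → Prop) [DecidablePred p] :
    cliquesIn G {y | y ∈ s ∧ p y} k = {T ∈ cliquesIn G s k | ∀ y ∈ T, p y} := by
  ext T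
  simp only [mem_filter, mem_cliquesIn, Set.subset_def, Set.mem_ofPred_eq, mem_coe]
  grind

/- The instance arguments are implicit so that these lemmas apply to the `Set.toFinite`
instances chosen in the definitions. -/
variable {W : Type} {_ : Fintype W} {_ : DecidableEq W}

lemma numCliques_zero (H : SimpleGraph W) : numCliques H 0 = 1 := by
  unfold numCliques
  rw [card_eq_one]
  exact ⟨∅, by ext; simp [SimpleGraph.isNClique_zero]⟩

lemma numCliques_eq_zero_of_card_lt (H : SimpleGraph W) (hk : Fintype.card W < k) :
    numCliques H k = 0 := by
  classical
  unfold numCliques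
  rw [card_eq_zero, SimpleGraph.cliqueFinset_eq_empty_iff]
  exact SimpleGraph.cliqueFree_of_card_lt hk

lemma eulerChar_eq_sum_range (H : SimpleGraph W) {m : ℕ} (hm : Nat.card W ≤ m) :
    eulerChar H = ∑ k ∈ range m, (-1 : ℤ) ^ k * numCliques H (k + 1) := by
  rw [Nat.card_eq_fintype_card] at hm
  refine sum_subset (range_subset_range.2 hm) fun k _ hk => ?_
  rw [numCliques_eq_zero_of_card_lt H (by simp at hk; omega), Nat.cast_zero, mul_zero]

lemma numCliques_induce (G : SimpleGraph V) (s : Set V) {_ : Fintype s} {_ : DecidableEq s}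
    (k : ℕ) :
    numCliques (G.induce s) k = #(cliquesIn G s k) := by
  classical
  unfold numCliques
  refine card_bij (fun t _ => t.map (.subtype _)) (fun t ht => ?_)
    (fun _ _ _ _ h => map_injective _ h) fun T hT => ?_
  · rw [SimpleGraph.mem_cliqueFinset_iff, SimpleGraph.isNClique_induce_iff] at ht
    exact mem_cliquesIn.2 ⟨ht, by simp⟩
  · obtain ⟨hT, hTs⟩ := mem_cliquesIn.1 hT
    have hmap : (T.subtype (· ∈ s)).map (.subtype _) = T := subtype_map_of_mem fun y hy => hTs hy
    refine ⟨T.subtype (· ∈ s), ?_, hmap⟩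
    rw [SimpleGraph.mem_cliqueFinset_iff, SimpleGraph.isNClique_induce_iff, hmap]
    exact hT

end Cliques

section Index

variable (G : SimpleGraph V) (x : V)

lemma fIndex_eq_sum_cliquesIn (f : V → Fin (Fintype.card V)) :
    fIndex G f x = 1 - ∑ k ∈ range (Fintype.card V),
      (-1 : ℤ) ^ k * #{T ∈ cliquesIn G (G.neighborSet x) (k + 1) | ∀ y ∈ T, f y < f x} := by
  unfold fIndex
  rw [eulerChar_eq_sum_range _ ((Finite.card_subtype_le _).trans Nat.card_eq_fintype_card.le)]
  simp only [numCliques_induce, ← cliquesIn_setOf_and]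
  rfl

lemma curvature_eq_one_sub_sum_cliquesIn : curvature G x = 1 - ∑ k ∈ range (Fintype.card V),
    (-1 : ℚ) ^ k * #(cliquesIn G (G.neighborSet x) (k + 1)) / (k + 2) := by
  unfold curvature
  rw [sum_range_succ', numCliques_zero]
  simp only [numCliques_induce]
  rw [add_comm, sub_eq_add_neg, ← sum_neg_distrib]
  congr 1
  · norm_num
  · refine sum_congr rfl fun k _ => ?_
    push_cast
    ring

lemma sum_card_cliquesIn_neighborSet_lt (k : ℕ) :
    ∑ f : V ≃ Fin (Fintype.card V),
        (#{T ∈ cliquesIn G (G.neighborSet x) (k + 1) | ∀ y ∈ T, f y < f x} : ℚ)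
      = #(cliquesIn G (G.neighborSet x) (k + 1)) * (Fintype.card V).factorial / (k + 2) := by
  have hC : ∀ T ∈ cliquesIn G (G.neighborSet x) (k + 1), x ∉ T ∧ #T = k + 1 := fun T hT =>
    ⟨fun hx => G.notMem_neighborSet_self ((mem_cliquesIn.1 hT).2 hx),
      (mem_cliquesIn.1 hT).1.card_eq⟩
  rw [eq_div_iff (by positivity), ← Fintype.card_equiv (Fintype.equivFin V)]
  exact_mod_cast sum_card_filter_forall_lt_mul hC

end Index

/-- **Index expectation**: for every vertex `x`,
`(1/n!) Σ_{f bijection} i_f(x) = K(x)`, the sum over all `n!` bijections `f : V → {1,…,n}`. -/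
theorem index_expectation (G : SimpleGraph V) (x : V) :
    (∑ f : V ≃ Fin (Fintype.card V), (fIndex G (⇑f) x : ℚ)) / (Fintype.card V).factorial
      = curvature G x := by
  rw [div_eq_iff (by positivity), curvature_eq_one_sub_sum_cliquesIn]
  push_cast [fIndex_eq_sum_cliquesIn, sum_sub_distrib]
  rw [sum_comm]
  simp only [← mul_sum, sum_card_cliquesIn_neighborSet_lt, sum_const, card_univ,
    Fintype.card_equiv (Fintype.equivFin V), nsmul_one, sub_mul, one_mul, sum_mul]
  congr 1
  exact sum_congr rfl fun k _ => by ring
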